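/- Let ε = 1 or ε = −1. For smooth τ, ξ : ℝ → ℝ define vector fields on ℝ⁴ by T(τ)(x,y,t,u) = ( (1/3)τ′(t)x − (ε/6)τ″(t)y², (2/3)τ′(t)y, τ(t), −(2/3)τ′(t)u + (1/3)τ″(t)x − (ε/6)τ′″(t)y² ) and X(ξ)(x,y,t,u) = (ξ(t), 0, 0, ξ′(t)). Then the Lie bracket satisfies [T(τ), X(ξ)] = X(τξ′ − (1/3)τ′ξ). -/

import Mathlib

open scoped ContDiff

/-- The Virasoro generator `T(τ)` of the KP symmetry algebra (equation (4.13) with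
`b = c₀ = c₁ = 0`), as a vector field on ℝ⁴ with coordinates `(x, y, t, u)`. -/
noncomputable def T (ε : ℝ) (τ : ℝ → ℝ) (p : ℝ × ℝ × ℝ × ℝ) : ℝ × ℝ × ℝ × ℝ :=
  (1 / 3 * deriv τ p.2.2.1 * p.1 - ε / 6 * deriv (deriv τ) p.2.2.1 * p.2.1 ^ 2,
   2 / 3 * deriv τ p.2.2.1 * p.2.1,
   τ p.2.2.1,
   -(2 / 3) * deriv τ p.2.2.1 * p.2.2.2 + 1 / 3 * deriv (deriv τ) p.2.2.1 * p.1
     - ε / 6 * deriv (deriv (deriv τ)) p.2.2.1 * p.2.1 ^ 2)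

/-- The vector field `X(ξ) = ξ(t)∂_x + ξ′(t)∂_u` on ℝ⁴ with coordinates `(x, y, t, u)`. -/
noncomputable def X (ξ : ℝ → ℝ) (p : ℝ × ℝ × ℝ × ℝ) : ℝ × ℝ × ℝ × ℝ :=
  (ξ p.2.2.1, 0, 0, deriv ξ p.2.2.1)

noncomputable def π₁ : (ℝ × ℝ × ℝ × ℝ) →L[ℝ] ℝ := ContinuousLinearMap.fst ℝ ℝ (ℝ × ℝ × ℝ)
noncomputable def π₂ : (ℝ × ℝ × ℝ × ℝ) →L[ℝ] ℝ :=
  (ContinuousLinearMap.fst ℝ ℝ (ℝ × ℝ)).comp (ContinuousLinearMap.snd ℝ ℝ (ℝ × ℝ × ℝ))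
noncomputable def π₃ : (ℝ × ℝ × ℝ × ℝ) →L[ℝ] ℝ :=
  (ContinuousLinearMap.fst ℝ ℝ ℝ).comp
    ((ContinuousLinearMap.snd ℝ ℝ (ℝ × ℝ)).comp (ContinuousLinearMap.snd ℝ ℝ (ℝ × ℝ × ℝ)))
noncomputable def π₄ : (ℝ × ℝ × ℝ × ℝ) →L[ℝ] ℝ :=
  (ContinuousLinearMap.snd ℝ ℝ ℝ).comp
    ((ContinuousLinearMap.snd ℝ ℝ (ℝ × ℝ)).comp (ContinuousLinearMap.snd ℝ ℝ (ℝ × ℝ × ℝ)))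

lemma hπ₁ (p : ℝ × ℝ × ℝ × ℝ) : HasFDerivAt (fun q : ℝ × ℝ × ℝ × ℝ => q.1) π₁ p :=
  hasFDerivAt_fst
lemma hπ₂ (p : ℝ × ℝ × ℝ × ℝ) : HasFDerivAt (fun q : ℝ × ℝ × ℝ × ℝ => q.2.1) π₂ p :=
  hasFDerivAt_fst.comp p hasFDerivAt_snd
lemma hπ₃ (p : ℝ × ℝ × ℝ × ℝ) : HasFDerivAt (fun q : ℝ × ℝ × ℝ × ℝ => q.2.2.1) π₃ p :=
  hasFDerivAt_fst.comp p (hasFDerivAt_snd.comp p hasFDerivAt_snd)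
lemma hπ₄ (p : ℝ × ℝ × ℝ × ℝ) : HasFDerivAt (fun q : ℝ × ℝ × ℝ × ℝ => q.2.2.2) π₄ p :=
  hasFDerivAt_snd.comp p (hasFDerivAt_snd.comp p hasFDerivAt_snd)

/-- `[T(τ), X(ξ)] = X(τξ′ − (1/3)τ′ξ)`. -/
theorem stmt6 (ε : ℝ) (hε : ε = 1 ∨ ε = -1)
    (τ ξ : ℝ → ℝ) (hτ : ContDiff ℝ (⊤ : ℕ∞) τ) (hξ : ContDiff ℝ (⊤ : ℕ∞) ξ) :
    ∀ p : ℝ × ℝ × ℝ × ℝ,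
      VectorField.lieBracket ℝ (T ε τ) (X ξ) p
        = X (fun t => τ t * deriv ξ t - 1 / 3 * deriv τ t * ξ t) p := by
  have hτ' : ContDiff ℝ ∞ τ := hτ.of_le (by simp)
  have hξ' : ContDiff ℝ ∞ ξ := hξ.of_le (by simp)
  have hτ1 : ContDiff ℝ ∞ (deriv τ) := (contDiff_infty_iff_deriv.mp hτ').2
  have hτ2 : ContDiff ℝ ∞ (deriv (deriv τ)) := (contDiff_infty_iff_deriv.mp hτ1).2
  have hτ3 : ContDiff ℝ ∞ (deriv (deriv (deriv τ))) := (contDiff_infty_iff_deriv.mp hτ2).2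
  have hξ1 : ContDiff ℝ ∞ (deriv ξ) := (contDiff_infty_iff_deriv.mp hξ').2
  rintro ⟨x, y, t, u⟩
  set p : ℝ × ℝ × ℝ × ℝ := (x, y, t, u) with hp
  have Dτ : HasDerivAt τ (deriv τ t) t := (hτ'.differentiable (by simp) t).hasDerivAt
  have Dτ1 : HasDerivAt (deriv τ) (deriv (deriv τ) t) t := (hτ1.differentiable (by simp) t).hasDerivAt
  have Dτ2 : HasDerivAt (deriv (deriv τ)) (deriv (deriv (deriv τ)) t) t :=
    (hτ2.differentiable (by simp) t).hasDerivAt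
  have Dτ3 : HasDerivAt (deriv (deriv (deriv τ))) (deriv (deriv (deriv (deriv τ))) t) t :=
    (hτ3.differentiable (by simp) t).hasDerivAt
  have Dξ : HasDerivAt ξ (deriv ξ t) t := (hξ'.differentiable (by simp) t).hasDerivAt
  have Dξ1 : HasDerivAt (deriv ξ) (deriv (deriv ξ) t) t := (hξ1.differentiable (by simp) t).hasDerivAt
  have Cτ : HasFDerivAt (fun q : ℝ × ℝ × ℝ × ℝ => τ q.2.2.1) (deriv τ t • π₃) p :=
    Dτ.comp_hasFDerivAt p (hπ₃ p)
  have Cτ1 : HasFDerivAt (fun q : ℝ × ℝ × ℝ × ℝ => deriv τ q.2.2.1)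
      (deriv (deriv τ) t • π₃) p := by
      have := Dτ1.comp_hasFDerivAt p (hπ₃ p); exact this
  have Cτ2 : HasFDerivAt (fun q : ℝ × ℝ × ℝ × ℝ => deriv (deriv τ) q.2.2.1)
      (deriv (deriv (deriv τ)) t • π₃) p := by
      have := Dτ2.comp_hasFDerivAt p (hπ₃ p); exact this
  have Cτ3 : HasFDerivAt (fun q : ℝ × ℝ × ℝ × ℝ => deriv (deriv (deriv τ)) q.2.2.1)
      (deriv (deriv (deriv (deriv τ))) t • π₃) p := by
      have := Dτ3.comp_hasFDerivAt p (hπ₃ p); exact this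
  have Cξ : HasFDerivAt (fun q : ℝ × ℝ × ℝ × ℝ => ξ q.2.2.1) (deriv ξ t • π₃) p :=
    Dξ.comp_hasFDerivAt p (hπ₃ p)
  have Cξ1 : HasFDerivAt (fun q : ℝ × ℝ × ℝ × ℝ => deriv ξ q.2.2.1)
      (deriv (deriv ξ) t • π₃) p := by
      have := Dξ1.comp_hasFDerivAt p (hπ₃ p); exact this
  have hT1 := ((Cτ1.const_mul (1/3 : ℝ)).mul (hπ₁ p)).sub
      ((Cτ2.const_mul (ε/6 : ℝ)).mul (((hasDerivAt_pow 2 y).comp_hasFDerivAt p (hπ₂ p))))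
  have hT2 := (Cτ1.const_mul (2/3 : ℝ)).mul (hπ₂ p)
  have hT4 := (((Cτ1.const_mul (-(2/3) : ℝ)).mul (hπ₄ p)).add
      ((Cτ2.const_mul (1/3 : ℝ)).mul (hπ₁ p))).sub
      ((Cτ3.const_mul (ε/6 : ℝ)).mul (((hasDerivAt_pow 2 y).comp_hasFDerivAt p (hπ₂ p))))
  have HT : HasFDerivAt (T ε τ) _ p := HasFDerivAt.prodMk hT1 (HasFDerivAt.prodMk hT2 (HasFDerivAt.prodMk Cτ hT4))
  have HX : HasFDerivAt (X ξ) _ p :=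
    Cξ.prodMk ((hasFDerivAt_const (0:ℝ) p).prodMk ((hasFDerivAt_const (0:ℝ) p).prodMk Cξ1))
  have Dη : HasDerivAt (fun t => τ t * deriv ξ t - 1 / 3 * deriv τ t * ξ t)
      (deriv τ t * deriv ξ t + τ t * deriv (deriv ξ) t
        - (1 / 3 * deriv (deriv τ) t * ξ t + 1 / 3 * deriv τ t * deriv ξ t)) t := by
    have := (Dτ.mul Dξ1).sub (((Dτ1.const_mul (1/3 : ℝ)).mul Dξ))
    convert this using 1
    all_goals rfl
  rw [VectorField.lieBracket, HT.fderiv, HX.fderiv]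
  simp only [X, T, hp, Dη.deriv]
  simp only [ContinuousLinearMap.prod_apply, ContinuousLinearMap.sub_apply,
    ContinuousLinearMap.add_apply, ContinuousLinearMap.smul_apply,
    ContinuousLinearMap.comp_apply, π₁, π₂, π₃, π₄,
    ContinuousLinearMap.coe_fst', ContinuousLinearMap.coe_snd',
    ContinuousLinearMap.zero_apply,
    ContinuousLinearMap.mul_apply, smul_eq_mul, Prod.mk_sub_mk, Prod.mk.injEq]
  refine ⟨by ring, by ring, by ring, by ring⟩
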